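/- Let (h, ·) be a finite-dimensional left-symmetric algebra. The symplectic cotangent Lie algebra (h* ×_ℓ h, ω) is a symplectic Novikov Lie algebra if and only if (h, ·) is Novikov and associative. -/

import Mathlib

/-!
Nondegeneracy of `ω` determines the product `⊙` explicitly:
`(α, x) ⊙ (β, y) = (R_y^t α + (R_x - L_x)^t β, x · y)`, where `R_y t = t · y`.
Comparing components of `(u ⊙ v) ⊙ w` and `(u ⊙ w) ⊙ v`, `⊙` is right-commutative iff `·` is
right-commutative and `(t z) x - x (t z) = t (x z) - (x z) t`. For a right-commutative
left-symmetric product the latter identity is equivalent to associativity.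
-/

open Module

/-- The Lie bracket of the cotangent Lie algebra `h* ×_ℓ h` of a left-symmetric
algebra `(h, mul)`: `[(α,x),(β,y)] = (ℓ_y^t α - ℓ_x^t β, [x,y])`. -/
def cotangentBracket {h : Type*} [AddCommGroup h] [Module ℝ h]
    (mul : h →ₗ[ℝ] h →ₗ[ℝ] h) :
    (Dual ℝ h × h) → (Dual ℝ h × h) → (Dual ℝ h × h) :=
  fun u v =>
    ((mul v.2).dualMap u.1 - (mul u.2).dualMap v.1, mul u.2 v.2 - mul v.2 u.2)

/-- The symplectic form of the cotangent Lie algebra: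
`ω((α,x),(β,y)) = β(x) - α(y)`. -/
def cotangentForm {h : Type*} [AddCommGroup h] [Module ℝ h] :
    (Dual ℝ h × h) → (Dual ℝ h × h) → ℝ :=
  fun u v => v.1 u.2 - u.1 v.2

section Algebra

variable {K h : Type*} [Field K] [NeZero (2 : K)] [AddCommGroup h] [Module K h]

theorem mul_assoc_iff_of_leftSymmetric_of_rightComm (mul : h →ₗ[K] h →ₗ[K] h)
    (hls : ∀ x y z : h,
      mul (mul x y) z - mul x (mul y z) = mul (mul y x) z - mul y (mul x z))
    (hrc : ∀ x y z : h, mul (mul x y) z = mul (mul x z) y) :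
    (∀ t x z : h, mul (mul t z) x - mul x (mul t z) = mul t (mul x z) - mul (mul x z) t) ↔
      ∀ x y z : h, mul (mul x y) z = mul x (mul y z) := by
  constructor
  · intro hcomm x y z
    have hxy := hcomm x y z
    rw [hrc x z y, hrc y z x] at hxy
    have htwice : (2 : K) • mul (mul x y) z = (2 : K) • mul x (mul y z) := by
      linear_combination (norm := module) hxy - hls y x z
    exact smul_right_injective h two_ne_zero htwice
  · intro hassoc t x z
    rw [hrc t z x, hassoc t x z, ← hassoc x t z, hrc x t z]

end Algebra

section Cotangent

variable {h : Type*} [AddCommGroup h] [Module ℝ h]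

theorem eq_of_forall_cotangentForm_eq {a b : Dual ℝ h × h}
    (hab : ∀ w, cotangentForm a w = cotangentForm b w) : a = b := by
  refine Prod.ext (LinearMap.ext fun z => ?_) (Module.eval_apply_injective ℝ ?_)
  · simpa [cotangentForm] using hab (0, z)
  · ext φ
    simpa [cotangentForm] using hab (φ, 0)

def cotangentProduct (mul : h →ₗ[ℝ] h →ₗ[ℝ] h) (u v : Dual ℝ h × h) : Dual ℝ h × h :=
  ((mul.flip v.2).dualMap u.1 + (mul.flip u.2 - mul u.2).dualMap v.1, mul u.2 v.2)

variable (mul : h →ₗ[ℝ] h →ₗ[ℝ] h)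

@[simp]
theorem cotangentProduct_fst_apply (u v : Dual ℝ h × h) (t : h) :
    (cotangentProduct mul u v).1 t = u.1 (mul t v.2) + v.1 (mul t u.2 - mul u.2 t) :=
  rfl

@[simp]
theorem cotangentProduct_snd (u v : Dual ℝ h × h) :
    (cotangentProduct mul u v).2 = mul u.2 v.2 :=
  rfl

theorem cotangentForm_cotangentProduct (u v w : Dual ℝ h × h) :
    cotangentForm (cotangentProduct mul u v) w = - cotangentForm v (cotangentBracket mul u w) := by
  simp only [cotangentForm, cotangentBracket, cotangentProduct_fst_apply, cotangentProduct_snd,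
    LinearMap.sub_apply, LinearMap.dualMap_apply, map_sub]
  ring

theorem eq_cotangentProduct_of_cotangentForm
    {p : (Dual ℝ h × h) → (Dual ℝ h × h) → (Dual ℝ h × h)}
    (hp : ∀ u v w : Dual ℝ h × h,
      cotangentForm (p u v) w = - cotangentForm v (cotangentBracket mul u w)) :
    p = cotangentProduct mul := by
  ext1 u; ext1 v
  refine eq_of_forall_cotangentForm_eq fun w => ?_
  rw [hp, cotangentForm_cotangentProduct]

theorem cotangentProduct_rightComm_iff :
    (∀ u v w : Dual ℝ h × h,
        cotangentProduct mul (cotangentProduct mul u v) w =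
          cotangentProduct mul (cotangentProduct mul u w) v) ↔
      (∀ x y z : h, mul (mul x y) z = mul (mul x z) y) ∧
        ∀ t x z : h, mul (mul t z) x - mul x (mul t z) = mul t (mul x z) - mul (mul x z) t := by
  constructor
  · intro H
    refine ⟨fun x y z => by simpa using congrArg Prod.snd (H (0, x) (0, y) (0, z)), ?_⟩
    intro t x z
    refine Module.eval_apply_injective ℝ (LinearMap.ext fun φ => ?_)
    have hφ := LinearMap.congr_fun (congrArg Prod.fst (H (0, x) (φ, 0) (0, z))) t
    simpa using hφ
  · rintro ⟨hrc, hcomm⟩ ⟨α, x⟩ ⟨β, y⟩ ⟨γ, z⟩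
    refine Prod.ext (LinearMap.ext fun t => ?_) (hrc x y z)
    simp only [cotangentProduct_fst_apply, cotangentProduct_snd]
    rw [hrc t z y, hcomm t x z, hcomm t x y]
    ring

end Cotangent

theorem snla_stmt_10 (h : Type*) [AddCommGroup h] [Module ℝ h]
    (mul : h →ₗ[ℝ] h →ₗ[ℝ] h)
    (hls : ∀ x y z : h,
      mul (mul x y) z - mul x (mul y z) = mul (mul y x) z - mul y (mul x z))
    (p : (Dual ℝ h × h) → (Dual ℝ h × h) → (Dual ℝ h × h))
    (hdef : ∀ u v w : Dual ℝ h × h,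
      cotangentForm (p u v) w = - cotangentForm v (cotangentBracket mul u w)) :
    (∀ u v w : Dual ℝ h × h, p (p u v) w = p (p u w) v) ↔
      ((∀ x y z : h, mul (mul x y) z = mul (mul x z) y) ∧
        (∀ x y z : h, mul (mul x y) z = mul x (mul y z))) := by
  rw [eq_cotangentProduct_of_cotangentForm mul hdef, cotangentProduct_rightComm_iff]
  exact and_congr_right fun hrc => mul_assoc_iff_of_leftSymmetric_of_rightComm mul hls hrc
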